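/- arXiv:2010.00707 — 6 statements merged into one kernel-verified Lean document; each statement's English description precedes it below -/
import Mathlib

section
/- Let d ≥ 2 and m ≥ 7 be integers. Consider the ℚ-vector subspace 𝒜_{d,m} of ℚ^{d−1} consisting of all tuples (n_0, …, n_{d−2}) of rational numbers such that ∑_{j=0}^{d−2} n_j ζ_d^{j(β+1)} = 0 for every integer β with 0 ≤ β ≤ d−2 and (β+1)/d < 1/2 − 1/m. Then the dimension of 𝒜_{d,m} over ℚ equals 1 if d is even and equals 0 if d is odd. -/
open scoped BigOperators

/-- The standard primitive `d`-th root of unity `exp(2πi/d)`. -/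
noncomputable def zeta (d : ℕ) : ℂ := Complex.exp (2 * Real.pi * Complex.I / d)

/-- The ℚ-subspace of `ℚ^(d-1)` of tuples `(n_0, …, n_{d-2})` such that
`∑_j n_j ζ_d^{j(β+1)} = 0` for every `β` with `0 ≤ β ≤ d-2` satisfying `cond β`. -/
noncomputable def solSpace (d : ℕ) (cond : ℕ → Prop) [DecidablePred cond] :
    Submodule ℚ (Fin (d - 1) → ℚ) :=
  LinearMap.ker (LinearMap.pi (fun β : Fin (d - 1) =>
    if cond (β : ℕ) then
      ∑ j : Fin (d - 1),
        (zeta d ^ ((j : ℕ) * ((β : ℕ) + 1))) •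
          ((Algebra.linearMap ℚ ℂ).comp (LinearMap.proj j))
    else 0))

open Polynomial

noncomputable def pOf (n : ℕ) (x : Fin n → ℚ) : ℚ[X] := ∑ j : Fin n, C (x j) * X ^ (j : ℕ)

lemma pOf_coeff {n : ℕ} (x : Fin n → ℚ) (i : ℕ) (h : i < n) : (pOf n x).coeff i = x ⟨i, h⟩ := by
  rw [pOf, finset_sum_coeff]
  have : ∀ j : Fin n, (C (x j) * X ^ (j : ℕ)).coeff i = if j = ⟨i, h⟩ then x j else 0 := by
    intro j
    rw [coeff_C_mul, coeff_X_pow]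
    rcases eq_or_ne j ⟨i, h⟩ with hj | hj
    · simp [hj]
    · have hij : i ≠ (j : ℕ) := fun hij => hj (Fin.ext hij.symm)
      simp [hj, hij]
  simp_rw [this]
  simp

lemma pOf_degree_lt {n : ℕ} (x : Fin n → ℚ) : (pOf n x).degree < n := by
  apply lt_of_le_of_lt (degree_sum_le _ _)
  apply Finset.sup_lt_iff (by exact_mod_cast WithBot.bot_lt_coe n) |>.2
  intro j _
  exact lt_of_le_of_lt (degree_C_mul_X_pow_le _ _) (by exact_mod_cast j.isLt)

lemma pOf_coeff_zero {n : ℕ} (x : Fin n → ℚ) (i : ℕ) (h : n ≤ i) : (pOf n x).coeff i = 0 := by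
  apply coeff_eq_zero_of_degree_lt
  exact lt_of_lt_of_le (pOf_degree_lt x) (by exact_mod_cast h)

lemma aeval_zeta_pow_eq_zero_iff {d : ℕ} (hd : 2 ≤ d) {k : ℕ} (hk1 : 1 ≤ k) (hkd : k < d)
    (p : ℚ[X]) :
    (Polynomial.aeval (zeta d ^ k)) p = 0 ↔ cyclotomic (d / Nat.gcd d k) ℚ ∣ p := by
  have hd0 : 0 < d := by omega
  have hζ : IsPrimitiveRoot (zeta d) d := Complex.isPrimitiveRoot_exp d (by omega)
  set g := Nat.gcd d k with hg
  have hg0 : 0 < g := Nat.gcd_pos_of_pos_left _ hd0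
  have hgd : g ∣ d := Nat.gcd_dvd_left d k
  have hgk : g ∣ k := Nat.gcd_dvd_right d k
  set e := d / g with he
  have he0 : 0 < e := Nat.div_pos (Nat.le_of_dvd hd0 hgd) hg0
  have hprim : IsPrimitiveRoot (zeta d ^ k) e := by
    have h1 : IsPrimitiveRoot (zeta d ^ g) e := hζ.pow hd0 (Nat.mul_div_cancel' hgd).symm
    have h2 := h1.pow_of_coprime (k / g) (Nat.coprime_div_gcd_div_gcd hg0).symm
    rwa [← pow_mul, Nat.mul_div_cancel' hgk] at h2
  have hmin : cyclotomic e ℚ = minpoly ℚ (zeta d ^ k) := cyclotomic_eq_minpoly_rat hprim he0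
  rw [hmin]
  constructor
  · exact fun h => minpoly.dvd ℚ _ h
  · rintro ⟨q, rfl⟩
    rw [map_mul, minpoly.aeval, zero_mul]

lemma mem_solSpace_iff {d : ℕ} (cond : ℕ → Prop) [DecidablePred cond] (x : Fin (d - 1) → ℚ) :
    x ∈ solSpace d cond ↔
      ∀ β : Fin (d - 1), cond (β : ℕ) →
        (Polynomial.aeval (zeta d ^ ((β : ℕ) + 1))) (pOf (d - 1) x) = 0 := by
  have key : ∀ β : Fin (d - 1),
      (∑ j : Fin (d - 1), (zeta d ^ ((j : ℕ) * ((β : ℕ) + 1))) •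
          ((Algebra.linearMap ℚ ℂ).comp (LinearMap.proj j))) x
        = (Polynomial.aeval (zeta d ^ ((β : ℕ) + 1))) (pOf (d - 1) x) := by
    intro β
    rw [pOf, map_sum, LinearMap.sum_apply]
    refine Finset.sum_congr rfl fun j _ => ?_
    rw [map_mul, aeval_C, map_pow, aeval_X, LinearMap.smul_apply, LinearMap.comp_apply]
    rw [LinearMap.proj_apply, Algebra.linearMap_apply, smul_eq_mul, ← pow_mul,
      mul_comm ((β : ℕ) + 1) (j : ℕ), mul_comm]
  rw [solSpace, LinearMap.mem_ker]
  rw [funext_iff]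
  simp only [LinearMap.pi_apply, Pi.zero_apply, apply_ite (fun L : (Fin (d-1) → ℚ) →ₗ[ℚ] ℂ => L x),
    LinearMap.zero_apply, ite_eq_right_iff]
  exact forall_congr' fun β => by rw [key β]

lemma mem_solSpace_iff_dvd {d m : ℕ} (hd : 2 ≤ d) (hm : 7 ≤ m) (x : Fin (d - 1) → ℚ) :
    x ∈ solSpace d (fun β => ((β : ℚ) + 1) / d < 1 / 2 - 1 / m) ↔
      (∏ e ∈ d.divisors.filter (fun e => 3 ≤ e), cyclotomic e ℚ) ∣ pOf (d - 1) x := by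
  have hd0 : 0 < d := by omega
  have hdQ : (0 : ℚ) < d := by exact_mod_cast hd0
  have hmQ : (0 : ℚ) < m := by exact_mod_cast (by omega : 0 < m)
  rw [mem_solSpace_iff]
  constructor
  · intro h
    apply Finset.prod_dvd_of_coprime
    · intro a ha b hb hab
      exact cyclotomic.isCoprime_rat hab
    · intro e he
      rw [Finset.mem_filter, Nat.mem_divisors] at he
      obtain ⟨⟨hedvd, -⟩, he3⟩ := he
      have he0 : 0 < e := by omega
      set k := d / e with hk
      have hke : k * e = d := Nat.div_mul_cancel hedvd
      have hk1 : 1 ≤ k := Nat.div_pos (Nat.le_of_dvd hd0 hedvd) he0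
      have hkd : k < d := Nat.div_lt_self hd0 (by omega)
      have hkdvd : k ∣ d := Nat.div_dvd_of_dvd hedvd
      have hβlt : k - 1 < d - 1 := by omega
      have hcond : (((k - 1 : ℕ) : ℚ) + 1) / d < 1 / 2 - 1 / m := by
        have hcast : ((k - 1 : ℕ) : ℚ) + 1 = (k : ℚ) := by
          push_cast [Nat.cast_sub hk1]
          ring
        rw [hcast]
        have hkq : (k : ℚ) * e = d := by exact_mod_cast hke
        have heQ : (0 : ℚ) < e := by exact_mod_cast he0
        have h1 : (k : ℚ) / d = 1 / e := by
          field_simp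
          linarith [hkq]
        rw [h1]
        have h2 : (1 : ℚ) / e ≤ 1 / 3 := by
          apply one_div_le_one_div_of_le (by norm_num)
          exact_mod_cast he3
        have h3 : (1 : ℚ) / m ≤ 1 / 7 := by
          apply one_div_le_one_div_of_le (by norm_num)
          exact_mod_cast hm
        linarith
      have := h ⟨k - 1, hβlt⟩ hcond
      have hk1' : (k - 1 : ℕ) + 1 = k := by omega
      rw [hk1'] at this
      rw [aeval_zeta_pow_eq_zero_iff hd hk1 hkd] at this
      rwa [Nat.gcd_eq_right hkdvd,
        show d / k = e from by rw [hk]; exact Nat.div_div_self hedvd (by omega)] at this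
  · intro hdvd β hβ
    set k := (β : ℕ) + 1 with hk
    have hk1 : 1 ≤ k := by omega
    have hkd : k < d := by have := β.isLt; omega
    have hg0 : 0 < Nat.gcd d k := Nat.gcd_pos_of_pos_left _ hd0
    have hgd : Nat.gcd d k ∣ d := Nat.gcd_dvd_left d k
    have hgk : Nat.gcd d k ∣ k := Nat.gcd_dvd_right d k
    have hge : Nat.gcd d k * (d / Nat.gcd d k) = d := Nat.mul_div_cancel' hgd
    have he0 : 0 < d / Nat.gcd d k := Nat.div_pos (Nat.le_of_dvd hd0 hgd) hg0
    have he3 : 3 ≤ d / Nat.gcd d k := by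
      rcases (show d / Nat.gcd d k = 1 ∨ d / Nat.gcd d k = 2 ∨ 3 ≤ d / Nat.gcd d k from by
        omega) with h1 | h2 | h3
      · exfalso
        rw [h1, mul_one] at hge
        rw [hge] at hgk
        exact absurd (Nat.le_of_dvd (by omega) hgk) (by omega)
      · exfalso
        rw [h2] at hge
        set g := Nat.gcd d k with hgdef
        have hd2g : d = 2 * g := by omega
        have hkg : k = g := by
          obtain ⟨c, hc⟩ := hgk
          have hc0 : 0 < c := by
            rcases Nat.eq_zero_or_pos c with h0 | h0
            · subst h0; omega
            · exact h0
          have hc2 : c < 2 := by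
            by_contra hcge
            push_neg at hcge
            have : 2 * g ≤ g * c := by nlinarith
            omega
          have hc1 : c = 1 := by omega
          rw [hc1, mul_one] at hc
          exact hc
        have hβk : ((β : ℚ) + 1) = (k : ℚ) := by push_cast [hk]; ring
        rw [hβk] at hβ
        have hgQ : (0 : ℚ) < g := by exact_mod_cast hg0
        have hhalf : (k : ℚ) / d = 1 / 2 := by
          rw [hkg]
          have hdq : (d : ℚ) = 2 * g := by exact_mod_cast hd2g
          rw [hdq]
          field_simp
        rw [hhalf] at hβ
        have : (0 : ℚ) < 1 / m := by positivity
        linarith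
      · exact h3
    have hefilter : d / Nat.gcd d k ∈ d.divisors.filter (fun e => 3 ≤ e) := by
      rw [Finset.mem_filter, Nat.mem_divisors]
      exact ⟨⟨Nat.div_dvd_of_dvd hgd, by omega⟩, he3⟩
    have hcyc : cyclotomic (d / Nat.gcd d k) ℚ ∣ pOf (d - 1) x :=
      dvd_trans (Finset.dvd_prod_of_mem (fun e => cyclotomic e ℚ) hefilter) hdvd
    rw [aeval_zeta_pow_eq_zero_iff hd hk1 hkd]
    exact hcyc

theorem stmt0 (d m : ℕ) (hd : 2 ≤ d) (hm : 7 ≤ m) :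
    Module.finrank ℚ
      (solSpace d (fun β => ((β : ℚ) + 1) / d < 1 / 2 - 1 / m))
      = if Even d then 1 else 0 := by
  have hd0 : 0 < d := by omega
  set Q := ∏ e ∈ d.divisors.filter (fun e => 3 ≤ e), cyclotomic e ℚ with hQdef
  have hQmonic : Q.Monic := monic_prod_of_monic _ _ fun e _ => cyclotomic.monic e ℚ
  have hQne : Q ≠ 0 := hQmonic.ne_zero
  -- compute natDegree of Q
  have hsmall : d.divisors.filter (fun e => ¬ 3 ≤ e) = if Even d then {1, 2} else {1} := by
    split_ifs with h
    · ext e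
      simp only [Finset.mem_filter, Nat.mem_divisors, Finset.mem_insert, Finset.mem_singleton,
        not_le]
      constructor
      · rintro ⟨⟨hdvd, -⟩, hlt⟩
        have he0 : e ≠ 0 := by rintro rfl; exact absurd (zero_dvd_iff.mp hdvd) (by omega)
        omega
      · rintro (rfl | rfl)
        · exact ⟨⟨one_dvd _, by omega⟩, by omega⟩
        · exact ⟨⟨h.two_dvd, by omega⟩, by omega⟩
    · ext e
      simp only [Finset.mem_filter, Nat.mem_divisors, Finset.mem_singleton, not_le]
      constructor
      · rintro ⟨⟨hdvd, -⟩, hlt⟩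
        have he0 : e ≠ 0 := by rintro rfl; exact absurd (zero_dvd_iff.mp hdvd) (by omega)
        have he2 : e ≠ 2 := by
          rintro rfl
          exact h ((even_iff_two_dvd).mpr hdvd)
        omega
      · rintro rfl
        exact ⟨⟨one_dvd _, by omega⟩, by omega⟩
  have hQdeg : Q.natDegree = d - 1 - (if Even d then 1 else 0) := by
    have h1 : Q.natDegree = ∑ e ∈ d.divisors.filter (fun e => 3 ≤ e), (cyclotomic e ℚ).natDegree :=
      natDegree_prod _ _ fun e he => cyclotomic_ne_zero e ℚ
    have h2 : ∀ e ∈ d.divisors.filter (fun e => 3 ≤ e), (cyclotomic e ℚ).natDegree =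
        Nat.totient e := fun e _ => natDegree_cyclotomic e ℚ
    have h3 : Q.natDegree = ∑ e ∈ d.divisors.filter (fun e => 3 ≤ e), Nat.totient e :=
      h1.trans (Finset.sum_congr rfl h2)
    rw [h3]
    have hsplit : (∑ e ∈ d.divisors.filter (fun e => 3 ≤ e), Nat.totient e)
        + (∑ e ∈ d.divisors.filter (fun e => ¬ 3 ≤ e), Nat.totient e) = d := by
      rw [Finset.sum_filter_add_sum_filter_not]
      exact Nat.sum_totient d
    rw [hsmall] at hsplit
    split_ifs at hsplit ⊢ with h
    · have h4 : (∑ e ∈ ({1, 2} : Finset ℕ), Nat.totient e) = 2 := by decide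
      rw [h4] at hsplit
      omega
    · have h4 : (∑ e ∈ ({1} : Finset ℕ), Nat.totient e) = 1 := by decide
      rw [h4] at hsplit
      omega
  by_cases heven : Even d
  · -- even case: solution space is span of coefficients of Q
    rw [if_pos heven]
    rw [if_pos heven] at hQdeg
    have hQdeg2 : Q.natDegree = d - 2 := by omega
    set v : Fin (d - 1) → ℚ := fun j => Q.coeff (j : ℕ) with hv
    have hPv : pOf (d - 1) v = Q := by
      ext i
      rcases Nat.lt_or_ge i (d - 1) with hi | hi
      · rw [pOf_coeff v i hi]
      · exact (pOf_coeff_zero v i hi).trans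
          (coeff_eq_zero_of_natDegree_lt (p := Q) (by omega)).symm
    have hsol : solSpace d (fun β => ((β : ℚ) + 1) / d < 1 / 2 - 1 / m)
        = Submodule.span ℚ {v} := by
      apply le_antisymm
      · intro x hx
        rw [mem_solSpace_iff_dvd hd hm] at hx
        by_cases hx0 : pOf (d - 1) x = 0
        · have : x = 0 := by
            funext j
            have := pOf_coeff x (j : ℕ) j.isLt
            rw [hx0] at this
            simpa using this.symm
          rw [this]
          exact Submodule.zero_mem _
        · obtain ⟨R, hR⟩ := hx
          have hRne : R ≠ 0 := by rintro rfl; rw [mul_zero] at hR; exact hx0 hR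
          have hdegx : (pOf (d - 1) x).natDegree < d - 1 := by
            rw [Polynomial.natDegree_lt_iff_degree_lt hx0]
            exact pOf_degree_lt x
          have hdegmul : (pOf (d - 1) x).natDegree = Q.natDegree + R.natDegree := by
            rw [hR, natDegree_mul hQne hRne]
          have hRdeg : R.natDegree = 0 := by omega
          obtain ⟨c, hc⟩ := Polynomial.natDegree_eq_zero.mp hRdeg
          refine Submodule.mem_span_singleton.mpr ⟨c, ?_⟩
          funext j
          have h1 : x j = (pOf (d - 1) x).coeff (j : ℕ) := by
            rw [pOf_coeff x (j : ℕ) j.isLt]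
          rw [Pi.smul_apply, smul_eq_mul, hv]
          rw [h1, hR, ← hc, coeff_mul_C, mul_comm]
      · rw [Submodule.span_singleton_le_iff_mem]
        rw [mem_solSpace_iff_dvd hd hm, hPv]
    rw [hsol]
    have hvne : v ≠ 0 := by
      intro h0
      have h1 := congrFun h0 ⟨d - 2, by omega⟩
      rw [hv] at h1
      simp only [Pi.zero_apply] at h1
      have h2 : Q.coeff (d - 2) = 1 := by
        have := hQmonic.coeff_natDegree
        rwa [hQdeg2] at this
      rw [h2] at h1
      exact one_ne_zero h1
    exact finrank_span_singleton hvne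
  · -- odd case: solution space is trivial
    rw [if_neg heven]
    rw [if_neg heven] at hQdeg
    have hQdeg1 : Q.natDegree = d - 1 := by omega
    have hsol : solSpace d (fun β => ((β : ℚ) + 1) / d < 1 / 2 - 1 / m) = ⊥ := by
      rw [Submodule.eq_bot_iff]
      intro x hx
      rw [mem_solSpace_iff_dvd hd hm] at hx
      have hx0 : pOf (d - 1) x = 0 := by
        by_contra h0
        have hle := Polynomial.degree_le_of_dvd hx h0
        have hQd : Q.degree = ((d - 1 : ℕ) : WithBot ℕ) := by
          rw [Polynomial.degree_eq_natDegree hQne, hQdeg1]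
        rw [hQd] at hle
        exact absurd (lt_of_le_of_lt hle (pOf_degree_lt x)) (lt_irrefl _)
      funext j
      have := pOf_coeff x (j : ℕ) j.isLt
      rw [hx0] at this
      simpa using this.symm
    rw [hsol]
    exact finrank_bot ℚ _
end

section
/- Let d ≥ 2 and m ≥ 2 be integers. Consider the ℚ-vector subspace 𝒜_{d,m} of ℚ^{d−1} consisting of all tuples (n_0, …, n_{d−2}) of rational numbers such that ∑_{j=0}^{d−2} n_j ζ_d^{j(β+1)} = 0 for every integer β with 0 ≤ β ≤ d−2 and (β+1)/d < 1/2 − 1/m. Then the dimension of 𝒜_{d,m} over ℚ equals ∑ φ(d'), the sum ranging over all divisors d' of d with d' ≥ 2 and d'(m−2) ≤ 2m, where φ is Euler's totient function. -/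
open scoped BigOperators

open Polynomial

lemma zeta_prim {d : ℕ} (hd : d ≠ 0) : IsPrimitiveRoot (zeta d) d :=
  Complex.isPrimitiveRoot_exp d hd

lemma zeta_pow_prim {d : ℕ} (hd : 0 < d) (k : ℕ) :
    IsPrimitiveRoot (zeta d ^ k) (d / Nat.gcd d k) := by
  have hg : Nat.gcd d k ∣ d := Nat.gcd_dvd_left d k
  have hg0 : 0 < Nat.gcd d k := Nat.gcd_pos_of_pos_left _ hd
  have h1 : IsPrimitiveRoot (zeta d ^ Nat.gcd d k) (d / Nat.gcd d k) :=
    (zeta_prim hd.ne').pow hd (Nat.mul_div_cancel' hg).symm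
  have hco : (k / Nat.gcd d k).Coprime (d / Nat.gcd d k) := by
    rw [Nat.gcd_comm d k]
    exact Nat.coprime_div_gcd_div_gcd (Nat.gcd_comm d k ▸ hg0)
  have h2 := h1.pow_of_coprime (k / Nat.gcd d k) hco
  rwa [← pow_mul, Nat.mul_div_cancel' (Nat.gcd_dvd_right d k)] at h2

lemma cyclo_coprime {a b : ℕ} (ha : 0 < a) (hb : 0 < b) (hab : a ≠ b) :
    IsCoprime (cyclotomic a ℚ) (cyclotomic b ℚ) := by
  have ia := cyclotomic.irreducible_rat ha
  have ib := cyclotomic.irreducible_rat hb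
  rw [ia.coprime_iff_not_dvd]
  intro hdvd
  have hassoc := ia.associated_of_dvd ib hdvd
  have heq := eq_of_monic_of_associated (cyclotomic.monic a ℚ) (cyclotomic.monic b ℚ) hassoc
  exact hab (cyclotomic_injective (R := ℚ) heq)

lemma cond_iff {d m : ℕ} (hd : 2 ≤ d) (hm : 2 ≤ m) (β : ℕ) :
    ((β : ℚ) + 1) / d < 1 / 2 - 1 / m ↔ 2 * (β + 1) * m < d * (m - 2) := by
  have hd0 : (0 : ℚ) < d := by exact_mod_cast Nat.lt_of_lt_of_le Nat.zero_lt_two hd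
  have hm0 : (0 : ℚ) < m := by exact_mod_cast Nat.lt_of_lt_of_le Nat.zero_lt_two hm
  have h2m : (0:ℚ) < 2 * m := by positivity
  have heq : (1:ℚ)/2 - 1/m = ((m:ℚ) - 2)/(2*m) := by field_simp
  rw [heq, div_lt_div_iff₀ hd0 h2m, ← Nat.cast_lt (α := ℚ)]
  push_cast [Nat.cast_sub hm]
  constructor <;> intro h <;> nlinarith

lemma key_iff {d m : ℕ} (hd : 2 ≤ d) (hm : 2 ≤ m) (P : ℚ[X]) :
    (∀ β : ℕ, β < d - 1 → ((β : ℚ) + 1) / d < 1 / 2 - 1 / m →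
      Polynomial.aeval (zeta d ^ (β + 1)) P = 0) ↔
    ∀ d' ∈ d.divisors.filter (fun d' => 2 ≤ d' ∧ 2 * m < d' * (m - 2)),
      cyclotomic d' ℚ ∣ P := by
  have hd0 : 0 < d := lt_of_lt_of_le Nat.zero_lt_two hd
  constructor
  · intro H d' hd'
    simp only [Nat.mem_divisors, Finset.mem_filter] at hd'
    obtain ⟨⟨hdvd, -⟩, hd'2, hd'm⟩ := hd'
    set k := d / d' with hk
    have hdk : d' * k = d := Nat.mul_div_cancel' hdvd
    have hk0 : 0 < k := Nat.div_pos (Nat.le_of_dvd hd0 hdvd) (by omega)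
    have hkd : k < d := Nat.div_lt_self hd0 (by omega)
    have hm3 : 2 < m := by
      rcases Nat.lt_or_ge 2 m with h | h
      · exact h
      · interval_cases m <;> omega
    have hβ : k - 1 < d - 1 := by omega
    have hcond : (((k - 1 : ℕ) : ℚ) + 1) / d < 1 / 2 - 1 / m := by
      rw [cond_iff hd hm]
      have : k - 1 + 1 = k := by omega
      rw [this]
      calc 2 * k * m = k * (2 * m) := by ring
        _ < k * (d' * (m - 2)) := by
            exact Nat.mul_lt_mul_of_pos_left hd'm hk0
        _ = d * (m - 2) := by rw [← hdk]; ring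
    have hroot := H (k - 1) hβ hcond
    have hkk : k - 1 + 1 = k := by omega
    rw [hkk] at hroot
    have hprim : IsPrimitiveRoot (zeta d ^ k) d' := by
      have := zeta_pow_prim hd0 k
      have hgcd : Nat.gcd d k = k := Nat.gcd_eq_right (Nat.div_dvd_of_dvd hdvd)
      rwa [hgcd, Nat.div_div_self hdvd hd0.ne'] at this
    rw [cyclotomic_eq_minpoly_rat hprim (by omega)]
    exact minpoly.dvd ℚ _ hroot
  · intro H β hβ hcond
    rw [cond_iff hd hm] at hcond
    set k := β + 1 with hk
    have hk0 : 0 < k := Nat.succ_pos β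
    have hm3 : 2 < m := by
      rcases Nat.lt_or_ge 2 m with h | h
      · exact h
      · interval_cases m <;> simp_all
    have h2k : 2 * k < d := by
      have h1 : 2 * k * m < d * m := by
        calc 2 * k * m < d * (m - 2) := hcond
          _ ≤ d * m := Nat.mul_le_mul_left d (by omega)
      exact Nat.lt_of_mul_lt_mul_right h1
    set g0 := Nat.gcd d k with hg0def
    have hg0 : 0 < g0 := Nat.gcd_pos_of_pos_left _ hd0
    have hg0k : g0 ≤ k := Nat.le_of_dvd hk0 (Nat.gcd_dvd_right d k)
    set d' := d / g0 with hd'def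
    have hdk : d' * g0 = d := Nat.div_mul_cancel (Nat.gcd_dvd_left d k)
    have hprim : IsPrimitiveRoot (zeta d ^ k) d' := zeta_pow_prim hd0 k
    have hd'2 : 2 ≤ d' := by
      by_contra hcon
      push_neg at hcon
      interval_cases d' <;> omega
    have hd'm : 2 * m < d' * (m - 2) := by
      have h1 : g0 * (2 * m) < g0 * (d' * (m - 2)) := by
        calc g0 * (2 * m) = 2 * g0 * m := by ring
          _ ≤ 2 * k * m := by
              exact Nat.mul_le_mul_right m (Nat.mul_le_mul_left 2 hg0k)
          _ < d * (m - 2) := hcond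
          _ = g0 * (d' * (m - 2)) := by rw [← hdk]; ring
      exact Nat.lt_of_mul_lt_mul_left h1
    have hd'dvd : d' ∣ d := ⟨g0, hdk.symm⟩
    have hmem : d' ∈ d.divisors.filter (fun d' => 2 ≤ d' ∧ 2 * m < d' * (m - 2)) := by
      simp only [Nat.mem_divisors, Finset.mem_filter]
      exact ⟨⟨hd'dvd, hd0.ne'⟩, hd'2, hd'm⟩
    obtain ⟨Q, hQ⟩ := H d' hmem
    have hroot : Polynomial.aeval (zeta d ^ k) (cyclotomic d' ℚ) = 0 := by
      rw [aeval_def, ← eval_map, map_cyclotomic]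
      exact hprim.isRoot_cyclotomic (by omega)
    rw [hQ, map_mul, hroot, zero_mul]

lemma finrank_degreeLT' (n : ℕ) : Module.finrank ℚ ↥(degreeLT ℚ n) = n := by
  rw [(degreeLTEquiv ℚ n).finrank_eq]
  exact Module.finrank_fin_fun ℚ

lemma finrank_degreeLT_inf (K : ℕ) (g : ℚ[X]) (hg : g.Monic) (ht : g.natDegree ≤ K) :
    Module.finrank ℚ
      ↥(degreeLT ℚ K ⊓ Submodule.restrictScalars ℚ (Ideal.span {g}))
      = K - g.natDegree := by
  set t := g.natDegree with htdef
  set W := degreeLT ℚ K ⊓ Submodule.restrictScalars ℚ (Ideal.span {g}) with hW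
  have hg0 : g ≠ 0 := hg.ne_zero
  have hmap : ∀ Q ∈ degreeLT ℚ (K - t), (LinearMap.mulLeft ℚ g) Q ∈ W := by
    intro Q hQ
    rw [mem_degreeLT] at hQ
    have h1 : g * Q ∈ degreeLT ℚ K := by
      rw [mem_degreeLT]
      by_cases hQ0 : Q = 0
      · simp only [hQ0, mul_zero, degree_zero]
        exact WithBot.bot_lt_coe K
      · have hq : Q.natDegree < K - t := (natDegree_lt_iff_degree_lt hQ0).mpr hQ
        have h2 : (g * Q).natDegree < K := by
          rw [natDegree_mul hg0 hQ0]; omega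
        exact (natDegree_lt_iff_degree_lt (mul_ne_zero hg0 hQ0)).mp h2
    refine Submodule.mem_inf.mpr ⟨h1, ?_⟩
    show g * Q ∈ Ideal.span {g}
    exact Ideal.mem_span_singleton.mpr (Dvd.intro _ rfl)
  let f : ↥(degreeLT ℚ (K - t)) →ₗ[ℚ] ↥W := (LinearMap.mulLeft ℚ g).restrict hmap
  have hbij : Function.Bijective f := by
    constructor
    · rintro ⟨Q, hQ⟩ ⟨Q', hQ'⟩ h
      have h2 : g * Q = g * Q' := congrArg Subtype.val h
      exact Subtype.ext (mul_left_cancel₀ hg0 h2)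
    · rintro ⟨P, hP⟩
      obtain ⟨hP1, hP2⟩ := Submodule.mem_inf.mp hP
      rw [Submodule.restrictScalars_mem, Ideal.mem_span_singleton] at hP2
      obtain ⟨Q, hQ⟩ := hP2
      have hQmem : Q ∈ degreeLT ℚ (K - t) := by
        rw [mem_degreeLT]
        by_cases hQ0 : Q = 0
        · simp only [hQ0, degree_zero]
          exact WithBot.bot_lt_coe (K - t)
        · have hP0 : P ≠ 0 := by rw [hQ]; exact mul_ne_zero hg0 hQ0
          have h2 : P.natDegree < K := (natDegree_lt_iff_degree_lt hP0).mpr (mem_degreeLT.mp hP1)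
          have h3 : P.natDegree = t + Q.natDegree := by rw [hQ, natDegree_mul hg0 hQ0]
          exact (natDegree_lt_iff_degree_lt hQ0).mp (by omega)
      exact ⟨⟨Q, hQmem⟩, Subtype.ext hQ.symm⟩
  rw [← (LinearEquiv.ofBijective f hbij).finrank_eq, finrank_degreeLT']

theorem stmt1 (d m : ℕ) (hd : 2 ≤ d) (hm : 2 ≤ m) :
    Module.finrank ℚ
      (solSpace d (fun β => ((β : ℚ) + 1) / d < 1 / 2 - 1 / m))
      = ∑ d' ∈ d.divisors.filter (fun d' => 2 ≤ d' ∧ d' * (m - 2) ≤ 2 * m),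
          Nat.totient d' := by
  classical
  have hd0 : 0 < d := by omega
  set D := d.divisors.filter (fun d' => 2 ≤ d' ∧ 2 * m < d' * (m - 2)) with hD
  set g : ℚ[X] := ∏ d' ∈ D, cyclotomic d' ℚ with hgdef
  have hDpos : ∀ d' ∈ D, 0 < d' := by
    intro d' h
    rw [hD, Finset.mem_filter] at h
    omega
  have hgmonic : g.Monic := monic_prod_of_monic _ _ (fun d' _ => cyclotomic.monic d' ℚ)
  have hgdeg : g.natDegree = ∑ d' ∈ D, Nat.totient d' := by
    rw [hgdef, natDegree_prod _ _ (fun d' _ => cyclotomic_ne_zero d' ℚ)]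
    exact Finset.sum_congr rfl (fun d' _ => natDegree_cyclotomic d' ℚ)
  -- arithmetic about the two sums
  have hsum : (∑ d' ∈ D, Nat.totient d') +
      (∑ d' ∈ d.divisors.filter (fun d' => 2 ≤ d' ∧ d' * (m - 2) ≤ 2 * m), Nat.totient d')
      = d - 1 := by
    have h1 : ∑ d' ∈ d.divisors.filter (fun d' => 2 ≤ d'), Nat.totient d' = d - 1 := by
      have h2 := Nat.sum_totient d
      have h3 : d.divisors.filter (fun d' => 2 ≤ d') = d.divisors.erase 1 := by
        ext x
        simp only [Finset.mem_filter, Finset.mem_erase, Nat.mem_divisors]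
        constructor
        · rintro ⟨⟨hx1, hx2⟩, hx3⟩; exact ⟨by omega, hx1, hx2⟩
        · rintro ⟨hx1, hx2, hx3⟩
          have := Nat.pos_of_dvd_of_pos hx2 hd0
          exact ⟨⟨hx2, hx3⟩, by omega⟩
      have h4 := Finset.sum_erase_add d.divisors Nat.totient
        (Nat.one_mem_divisors.mpr hd0.ne')
      rw [Nat.totient_one] at h4
      rw [h3]
      exact Nat.eq_sub_of_add_eq (h4.trans h2)
    have h4 := Finset.sum_filter_add_sum_filter_not (d.divisors.filter (fun d' => 2 ≤ d'))
      (fun d' => 2 * m < d' * (m - 2)) Nat.totient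
    rw [Finset.filter_filter, Finset.filter_filter] at h4
    have h5 : (d.divisors.filter fun a => 2 ≤ a ∧ ¬ 2 * m < a * (m - 2))
        = d.divisors.filter (fun d' => 2 ≤ d' ∧ d' * (m - 2) ≤ 2 * m) := by
      apply Finset.filter_congr
      intro x _
      simp [not_lt]
    rw [h5, h1] at h4
    exact h4
  have htK : g.natDegree ≤ d - 1 := by omega
  -- identify the solution space
  set W' : Submodule ℚ ↥(degreeLT ℚ (d - 1)) :=
    Submodule.comap (degreeLT ℚ (d - 1)).subtype
      (Submodule.restrictScalars ℚ (Ideal.span {g})) with hW'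
  have hsol : solSpace d (fun β => ((β : ℚ) + 1) / d < 1 / 2 - 1 / m)
      = Submodule.map ((degreeLTEquiv ℚ (d - 1)) : ↥(degreeLT ℚ (d - 1)) →ₗ[ℚ] (Fin (d - 1) → ℚ)) W' := by
    ext n
    rw [Submodule.mem_map_equiv]
    set P : ℚ[X] := (((degreeLTEquiv ℚ (d - 1)).symm n : ↥(degreeLT ℚ (d-1))) : ℚ[X]) with hPdef
    have hP : P = ∑ i : Fin (d - 1), monomial (i : ℕ) (n i) := rfl
    have haeval : ∀ z : ℂ, Polynomial.aeval z P
        = ∑ j : Fin (d - 1), algebraMap ℚ ℂ (n j) * z ^ (j : ℕ) := by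
      intro z
      rw [hP, map_sum]
      exact Finset.sum_congr rfl (fun j _ => aeval_monomial z)
    have hmem : n ∈ solSpace d (fun β => ((β : ℚ) + 1) / d < 1 / 2 - 1 / m) ↔
        ∀ β : Fin (d - 1), (((β : ℕ) : ℚ) + 1) / d < 1 / 2 - 1 / m →
          Polynomial.aeval (zeta d ^ ((β : ℕ) + 1)) P = 0 := by
      rw [solSpace, LinearMap.mem_ker, funext_iff]
      apply forall_congr'
      intro β
      rw [LinearMap.pi_apply]
      by_cases h : (((β : ℕ) : ℚ) + 1) / d < 1 / 2 - 1 / m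
      · rw [if_pos h]
        simp only [LinearMap.sum_apply, LinearMap.smul_apply, LinearMap.comp_apply,
          LinearMap.proj_apply, Algebra.linearMap_apply, smul_eq_mul, Pi.zero_apply]
        rw [haeval]
        have hpow : ∀ j : Fin (d - 1),
            (zeta d ^ ((β : ℕ) + 1)) ^ (j : ℕ) = zeta d ^ ((j : ℕ) * ((β : ℕ) + 1)) := by
          intro j; rw [← pow_mul, Nat.mul_comm]
        constructor
        · intro hz _
          rw [← hz]
          exact Finset.sum_congr rfl (fun j _ => by rw [hpow, mul_comm])
        · intro hz
          rw [← hz h]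
          exact Finset.sum_congr rfl (fun j _ => by rw [hpow, mul_comm])
      · rw [if_neg h]
        simp only [LinearMap.zero_apply]
        exact iff_of_true rfl (fun hc => absurd hc h)
    rw [hmem]
    have hdvd : ((degreeLTEquiv ℚ (d - 1)).symm n ∈ W') ↔ g ∣ P := by
      rw [hW', Submodule.mem_comap, Submodule.restrictScalars_mem, Ideal.mem_span_singleton]
      exact Iff.rfl
    rw [hdvd]
    have hfin : (∀ β : Fin (d - 1), (((β : ℕ) : ℚ) + 1) / d < 1 / 2 - 1 / m →
          Polynomial.aeval (zeta d ^ ((β : ℕ) + 1)) P = 0) ↔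
        (∀ β : ℕ, β < d - 1 → ((β : ℚ) + 1) / d < 1 / 2 - 1 / m →
          Polynomial.aeval (zeta d ^ (β + 1)) P = 0) := by
      constructor
      · intro H β hβ hc
        exact H ⟨β, hβ⟩ hc
      · intro H β hc
        exact H (β : ℕ) β.isLt hc
    rw [hfin, key_iff hd hm P, ← hD]
    constructor
    · intro H
      rw [hgdef]
      refine Finset.prod_dvd_of_coprime ?_ H
      intro a ha b hb hab
      exact cyclo_coprime (hDpos a ha) (hDpos b hb) hab
    · intro H d' hd'
      exact dvd_trans (by rw [hgdef]; exact Finset.dvd_prod_of_mem _ hd') H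
  rw [hsol, LinearEquiv.finrank_map_eq]
  have heq2 : Module.finrank ℚ ↥W'
      = Module.finrank ℚ ↥(Submodule.map (degreeLT ℚ (d - 1)).subtype W') :=
    (Submodule.equivMapOfInjective _ (Submodule.injective_subtype _) W').finrank_eq
  rw [heq2, hW', Submodule.map_comap_subtype, finrank_degreeLT_inf (d - 1) g hgmonic htK, hgdeg]
  omega
end

section
/- Let d ≥ 2, p ≥ 2 and m ≥ 2 be integers with 1/p + 1/m < 1/2. If (n_0, …, n_{d−2}) is a tuple of rational numbers such that ∑_{j=0}^{d−2} n_j ζ_d^{j(β+1)} = 0 for every integer β with 0 ≤ β ≤ d−2 and (β+1)/d < 1 − 1/m − 1/p, then n_j = 0 for every j. -/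
open scoped BigOperators

/-!
Since `1/p + 1/m < 1/2`, the hypothesis gives `∑ⱼ nⱼ ζ^(jα) = 0` for every `1 ≤ α ≤ d/2`.
The coefficients are rational, so conjugating turns `α` into `d - α`, and the sums vanish for
all `1 ≤ α ≤ d - 1`. The `d - 1` points `ζ, …, ζ^(d-1)` are distinct, so the Vandermonde matrix
of the system is invertible and all `nⱼ` vanish.
-/

open ComplexConjugate

theorem Complex.conj_pow_eq_pow_sub {ζ : ℂ} {d : ℕ} (hζ : ζ ^ d = 1) (hd : d ≠ 0) {α : ℕ}
    (hα : α ≤ d) : conj (ζ ^ α) = ζ ^ (d - α) := by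
  have hζ0 : ζ ≠ 0 := by
    rintro rfl
    simp [hd] at hζ
  rw [← Complex.inv_eq_conj (by rw [norm_pow, Complex.norm_eq_one_of_pow_eq_one hζ hd, one_pow]),
    eq_comm, ← mul_eq_one_iff_eq_inv₀ (pow_ne_zero _ hζ0), ← pow_add, Nat.sub_add_cancel hα, hζ]

theorem Complex.conj_sum_ratCast_mul_pow {k d : ℕ} (c : Fin k → ℚ) {ζ : ℂ} (hζ : ζ ^ d = 1)
    (hd : d ≠ 0) {α : ℕ} (hα : α ≤ d) :
    conj (∑ j, (c j : ℂ) * ζ ^ ((j : ℕ) * α)) = ∑ j, (c j : ℂ) * ζ ^ ((j : ℕ) * (d - α)) := by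
  simp only [map_sum, map_mul, map_ratCast, pow_mul', map_pow,
    Complex.conj_pow_eq_pow_sub hζ hd hα]

theorem IsPrimitiveRoot.eq_zero_of_forall_sum_mul_pow_eq_zero {K : Type*} [CommRing K]
    [IsDomain K] {ζ : K} {d : ℕ} (hζ : IsPrimitiveRoot ζ d) {c : Fin (d - 1) → K}
    (hc : ∀ α, 1 ≤ α → α < d → ∑ j, c j * ζ ^ ((j : ℕ) * α) = 0) : c = 0 := by
  refine Matrix.eq_zero_of_forall_index_sum_mul_pow_eq_zero
    (f := fun i : Fin (d - 1) => ζ ^ ((i : ℕ) + 1)) ?_ fun i => ?_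
  · intro a b hab
    have := hζ.pow_inj (by omega) (by omega) hab
    exact Fin.ext (by omega)
  · simpa only [← pow_mul, mul_comm] using hc (i + 1) (by omega) (by omega)

theorem stmt2_general (d p m : ℕ)
    (h : (1 : ℚ) / p + 1 / m < 1 / 2)
    (n : Fin (d - 1) → ℚ)
    (hn : ∀ β : ℕ, β ≤ d - 2 → ((β : ℚ) + 1) / d < 1 - 1 / m - 1 / p →
      ∑ j : Fin (d - 1), (n j : ℂ) * zeta d ^ ((j : ℕ) * (β + 1)) = 0) :
    ∀ j, n j = 0 := by
  rcases Nat.eq_zero_or_pos d with rfl | hd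
  · exact fun j => j.elim0
  have hζ : IsPrimitiveRoot (zeta d) d := Complex.isPrimitiveRoot_exp d hd.ne'
  have h_low : ∀ α, 1 ≤ α → 2 * α ≤ d → ∑ j, (n j : ℂ) * zeta d ^ ((j : ℕ) * α) = 0 := by
    intro α h1 h2
    obtain ⟨β, rfl⟩ : ∃ β, α = β + 1 := ⟨α - 1, by omega⟩
    refine hn β (by omega) ?_
    have : ((β : ℚ) + 1) / d ≤ 1 / 2 := by
      rw [div_le_div_iff₀ (by exact_mod_cast hd) two_pos]
      exact_mod_cast (by omega : (β + 1) * 2 ≤ 1 * d)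
    linarith
  have h_all : ∀ α, 1 ≤ α → α < d → ∑ j, (n j : ℂ) * zeta d ^ ((j : ℕ) * α) = 0 := by
    intro α h1 h2
    rcases le_or_gt (2 * α) d with hα | hα
    · exact h_low α h1 hα
    · rw [← Nat.sub_sub_self h2.le, ← Complex.conj_sum_ratCast_mul_pow n hζ.pow_eq_one hd.ne'
        (Nat.sub_le d α), h_low (d - α) (by omega) (by omega), map_zero]
  intro j
  simpa using congr_fun (hζ.eq_zero_of_forall_sum_mul_pow_eq_zero h_all) j

theorem stmt2 (d p m : ℕ) (hd : 2 ≤ d) (hp : 2 ≤ p) (hm : 2 ≤ m)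
    (h : (1 : ℚ) / p + 1 / m < 1 / 2)
    (n : Fin (d - 1) → ℚ)
    (hn : ∀ β : ℕ, β ≤ d - 2 → ((β : ℚ) + 1) / d < 1 - 1 / m - 1 / p →
      ∑ j : Fin (d - 1), (n j : ℂ) * zeta d ^ ((j : ℕ) * (β + 1)) = 0) :
    ∀ j, n j = 0 :=
  stmt2_general d p m h n hn
end

section
/- For every integer d ≥ 2, the number of pairs of integers (b, c) with 0 ≤ b ≤ d−2, 0 ≤ c ≤ 1 and (b+1)/d + (c+1)/3 < 1/2 equals ⌊(d−1)/6⌋. -/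
open scoped BigOperators

theorem stmt8 (d : ℕ) (hd : 2 ≤ d) :
    ((((Finset.range (d - 1)) ×ˢ (Finset.range 2)).filter
        (fun bc => ((bc.1 : ℚ) + 1) / d + ((bc.2 : ℚ) + 1) / 3 < 1 / 2)).card : ℤ)
      = ⌊((d : ℚ) - 1) / 6⌋ := by
  have hd0 : (0:ℚ) < (d:ℚ) := by positivity
  have key : (((Finset.range (d - 1)) ×ˢ (Finset.range 2)).filter
        (fun bc => ((bc.1 : ℚ) + 1) / d + ((bc.2 : ℚ) + 1) / 3 < 1 / 2))
      = (Finset.range ((d-1)/6)).image (fun b => (b, 0)) := by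
    ext ⟨b, c⟩
    simp only [Finset.mem_filter, Finset.mem_image, Finset.mem_product, Finset.mem_range,
      Prod.mk.injEq]
    constructor
    · rintro ⟨⟨hb, hc⟩, hlt⟩
      have hc0 : c = 0 := by
        by_contra h
        interval_cases c
        · exact h rfl
        · have h1 : (0:ℚ) < ((b:ℚ)+1)/d := by positivity
          norm_num at hlt
          linarith
      subst hc0
      have h6 : 6 * (b + 1) < d := by
        have : ((b:ℚ)+1)/d < 1/6 := by norm_num at hlt; linarith
        rw [div_lt_iff₀ hd0] at this
        have := (by push_cast; linarith : ((6*(b+1) : ℕ) : ℚ) < (d:ℚ))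
        exact_mod_cast this
      refine ⟨b, ?_, rfl, rfl⟩
      omega
    · rintro ⟨a, ha, rfl, rfl⟩
      have h6 : 6 * (a + 1) < d := by omega
      have hbd : a < d - 1 := by omega
      refine ⟨⟨hbd, by norm_num⟩, ?_⟩
      have : ((a:ℚ)+1)/d < 1/6 := by
        rw [div_lt_iff₀ hd0]
        have : ((6*(a+1) : ℕ) : ℚ) < (d:ℚ) := by exact_mod_cast h6
        push_cast at this
        linarith
      norm_num
      linarith
  rw [key, Finset.card_image_of_injective _ (fun a b h => (Prod.mk.injEq _ _ _ _ ▸ h).1),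
    Finset.card_range]
  have h1 : ((d:ℚ) - 1) = ((d - 1 : ℕ) : ℚ) := by
    have : 1 ≤ d := by omega
    push_cast [this]
    ring
  rw [h1]
  rw [← Int.natCast_floor_eq_floor (by positivity),
    show ((6:ℚ)) = ((6:ℕ):ℚ) by norm_num, Nat.floor_div_eq_div]
end

section
/- For every integer d ≥ 2, the number of pairs of integers (b, c) with 0 ≤ b ≤ d−2, 0 ≤ c ≤ 1 and 1/2 < (b+1)/d + (c+1)/3 < 3/2 equals d − 2 + ⌈5d/6⌉ − ⌊d/6⌋. -/
open scoped BigOperators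

theorem stmt9 (d : ℕ) (hd : 2 ≤ d) :
    ((((Finset.range (d - 1)) ×ˢ (Finset.range 2)).filter
        (fun bc => 1 / 2 < ((bc.1 : ℚ) + 1) / d + ((bc.2 : ℚ) + 1) / 3 ∧
          ((bc.1 : ℚ) + 1) / d + ((bc.2 : ℚ) + 1) / 3 < 3 / 2)).card : ℤ)
      = (d : ℤ) - 2 + ⌈(5 * (d : ℚ)) / 6⌉ - ⌊(d : ℚ) / 6⌋ := by
  have hd0 : (0:ℚ) < (d:ℚ) := by
    have : 0 < d := by omega
    exact_mod_cast this
  have hset : (((Finset.range (d - 1)) ×ˢ (Finset.range 2)).filter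
        (fun bc => 1 / 2 < ((bc.1 : ℚ) + 1) / d + ((bc.2 : ℚ) + 1) / 3 ∧
          ((bc.1 : ℚ) + 1) / d + ((bc.2 : ℚ) + 1) / 3 < 3 / 2))
      = (Finset.Ico (d/6) (d-1)) ×ˢ {0} ∪ (Finset.range ((5*d-1)/6)) ×ˢ {1} := by
    ext ⟨b, c⟩
    simp only [Finset.mem_filter, Finset.mem_product, Finset.mem_range, Finset.mem_union,
      Finset.mem_Ico, Finset.mem_singleton]
    constructor
    · rintro ⟨⟨hb, hc⟩, h1, h2⟩
      have hb' : ((b:ℚ) + 1) / d < 1 := by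
        rw [div_lt_one hd0]
        have : b + 1 < d := by omega
        exact_mod_cast this
      interval_cases c
      · left
        refine ⟨⟨?_, hb⟩, rfl⟩
        have h1' : (1:ℚ)/6 < ((b:ℚ)+1)/d := by norm_num at h1 ⊢; linarith
        rw [div_lt_div_iff₀ (by norm_num) hd0] at h1'
        have hq : (d:ℚ) < 6 * ((b:ℚ)+1) := by linarith
        have : d < 6 * (b+1) := by exact_mod_cast hq
        omega
      · right
        refine ⟨?_, rfl⟩
        have h2' : ((b:ℚ)+1)/d < 5/6 := by norm_num at h2 ⊢; linarith
        rw [div_lt_div_iff₀ hd0 (by norm_num)] at h2'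
        have hq : 6 * ((b:ℚ)+1) < 5 * (d:ℚ) := by linarith
        have : 6 * (b+1) < 5 * d := by exact_mod_cast hq
        omega
    · rintro (⟨⟨hlo, hb⟩, rfl⟩ | ⟨hb, rfl⟩)
      · refine ⟨⟨hb, by norm_num⟩, ?_, ?_⟩
        · have hdb : d < 6 * (b+1) := by omega
          have hdb' : (d:ℚ) < 6 * ((b:ℚ)+1) := by exact_mod_cast hdb
          have : (1:ℚ)/6 < ((b:ℚ)+1)/d := by
            rw [div_lt_div_iff₀ (by norm_num) hd0]; linarith
          norm_num; linarith
        · have hb' : ((b:ℚ) + 1) / d < 1 := by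
            rw [div_lt_one hd0]
            have : b + 1 < d := by omega
            exact_mod_cast this
          norm_num; linarith
      · have hb1 : b < d - 1 := by omega
        have hdb : 6 * (b+1) < 5 * d := by omega
        refine ⟨⟨hb1, by norm_num⟩, ?_, ?_⟩
        · have : (0:ℚ) < ((b:ℚ)+1)/d := by positivity
          norm_num; linarith
        · have hdb' : 6 * ((b:ℚ)+1) < 5 * (d:ℚ) := by exact_mod_cast hdb
          have : ((b:ℚ)+1)/d < 5/6 := by
            rw [div_lt_div_iff₀ hd0 (by norm_num)]; linarith
          norm_num; linarith
  rw [hset]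
  rw [Finset.card_union_of_disjoint]
  · rw [Finset.card_product, Finset.card_product]
    simp only [Finset.card_singleton, Nat.card_Ico, Finset.card_range, mul_one]
    have hf : ⌊(d:ℚ)/6⌋ = (d:ℤ)/6 := by
      rw [show ((d:ℚ)) = ((d:ℤ):ℚ) by push_cast; ring,
        show (6:ℚ) = ((6:ℕ):ℚ) by norm_num]
      exact Rat.floor_intCast_div_natCast _ _
    have hc : ⌈(5*(d:ℚ))/6⌉ = -((-(5*(d:ℤ)))/6) := by
      rw [show ⌈(5*(d:ℚ))/6⌉ = -⌊-((5*(d:ℚ))/6)⌋ by rw [Int.floor_neg]; ring]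
      congr 1
      rw [show -((5*(d:ℚ))/6) = ((-(5*(d:ℤ)) : ℤ) : ℚ)/((6:ℕ):ℚ) by push_cast; ring]
      exact Rat.floor_intCast_div_natCast _ _
    rw [hf, hc]
    push_cast
    omega
  · simp only [Finset.disjoint_left, Finset.mem_product, Finset.mem_singleton]
    rintro ⟨b, c⟩ ⟨_, rfl⟩ ⟨_, h⟩
    exact one_ne_zero h.symm
end

section
/- For every real number λ with 0 < λ < 2, one has 2·F(2/3, −2/3, 4/3; 1−λ) − (2/3)·(λ+1)·F(2/3, 1/3, 4/3; 1−λ) = (2/3)·λ^{1/3}. -/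
/-!
Put `z = 1 - λ`, so that `λ + 1 = 2 - z` and, by the binomial theorem,
`λ^{1/3} = (1 - z)^{1/3} = F(-1/3, 1, 1; z)`; all three series converge for `|z| < 1`.
The constant terms agree (`2 - 4/3 = 2/3`). Because of the factor `z` in `2 - z`, the coefficient
of `z^{n+1}` mixes `(a)ₙ₊₁` and `(a)ₙ`; writing `(a)ₙ₊₁ = a (a+1)ₙ = (a)ₙ (a+n)` expresses it through
`(1/3)ₙ`, `(2/3)ₙ` and `(4/3)ₙ = 3 (1/3 + n) (1/3)ₙ`, leaving a rational identity in `n`.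
-/

open scoped BigOperators

/-- The Gauss hypergeometric series `F(a,b,c;z) = ∑ (a)ₙ(b)ₙ/((c)ₙ n!) zⁿ`. -/
noncomputable def hypF (a b c z : ℝ) : ℝ :=
  ∑' n : ℕ,
    (Polynomial.eval a (ascPochhammer ℝ n) * Polynomial.eval b (ascPochhammer ℝ n) /
      (Polynomial.eval c (ascPochhammer ℝ n) * (n.factorial : ℝ))) * z ^ n

theorem mem_eball_zero_one_of_abs_lt {z : ℝ} (hz : |z| < 1) : z ∈ Metric.eball (0 : ℝ) 1 := by
  rw [mem_eball_zero_iff]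
  simpa [enorm_eq_nnnorm, ← NNReal.coe_lt_coe] using hz

theorem hasSum_hypF {a b c z : ℝ} (habc : ∀ k : ℕ, (k : ℝ) ≠ -a ∧ (k : ℝ) ≠ -b ∧ (k : ℝ) ≠ -c)
    (hz : |z| < 1) :
    HasSum (fun n ↦ ordinaryHypergeometricCoefficient a b c n * z ^ n) (hypF a b c z) := by
  have hs := (ordinaryHypergeometricSeries ℝ a b c).summable (by
    rw [ordinaryHypergeometricSeries_radius_eq_one ℝ a b c habc]
    exact mem_eball_zero_one_of_abs_lt hz)
  simp only [ordinaryHypergeometricSeries_apply_eq, smul_eq_mul] at hs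
  have hF : hypF a b c z = ∑' n, ordinaryHypergeometricCoefficient a b c n * z ^ n :=
    tsum_congr fun n ↦ by ring
  exact hF ▸ hs.hasSum

theorem hasSum_one_sub_rpow (a : ℝ) {z : ℝ} (hz : |z| < 1) :
    HasSum (fun n ↦ ordinaryHypergeometricCoefficient (-a) 1 1 n * z ^ n) ((1 - z) ^ a) := by
  have h := (Real.one_add_rpow_hasFPowerSeriesOnBall_zero (a := a)).hasSum
    (mem_eball_zero_one_of_abs_lt (z := -z) (by rwa [abs_neg]))
  rw [binomialSeries_eq_ordinaryHypergeometricSeries (b := 1)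
    (fun k ↦ (neg_one_lt_zero.trans_le k.cast_nonneg).ne')] at h
  simp only [FormalMultilinearSeries.compContinuousLinearMap_apply, Function.comp_def,
    neg_apply, ContinuousLinearMap.id_apply, neg_neg, ordinaryHypergeometricSeries_apply_eq,
    smul_eq_mul, zero_sub, ← sub_eq_add_neg] at h
  exact h

theorem ascPochhammer_succ_eval_left {S : Type*} [CommSemiring S] (a : S) (n : ℕ) :
    (ascPochhammer S (n + 1)).eval a = a * (ascPochhammer S n).eval (a + 1) := by
  simp [ascPochhammer_succ_left, Polynomial.eval_comp]

theorem ordinaryHypergeometricCoefficient_combination_succ (n : ℕ) :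
    2 * ordinaryHypergeometricCoefficient (2/3 : ℝ) (-2/3) (4/3) (n + 1)
      - 4/3 * ordinaryHypergeometricCoefficient (2/3 : ℝ) (1/3) (4/3) (n + 1)
      - 2/3 * ordinaryHypergeometricCoefficient (-(1/3) : ℝ) 1 1 (n + 1)
      = -(2/3) * ordinaryHypergeometricCoefficient (2/3 : ℝ) (1/3) (4/3) n := by
  have h43 : (ascPochhammer ℝ n).eval (4/3) = 3 * (1/3 + n) * (ascPochhammer ℝ n).eval (1/3) := by
    have h := ascPochhammer_succ_eval n (1/3 : ℝ)
    rw [ascPochhammer_succ_eval_left] at h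
    norm_num at h
    linarith
  have h13 : 0 < (ascPochhammer ℝ n).eval (1/3 : ℝ) := ascPochhammer_pos n _ (by norm_num)
  simp only [ordinaryHypergeometricCoefficient, ascPochhammer_eval_one,
    ascPochhammer_succ_eval_left (-2/3 : ℝ), ascPochhammer_succ_eval_left (1/3 : ℝ),
    ascPochhammer_succ_eval_left (-(1/3) : ℝ), ascPochhammer_succ_eval n (2/3 : ℝ),
    ascPochhammer_succ_eval n (4/3 : ℝ)]
  norm_num
  rw [h43]
  push_cast [Nat.factorial_succ]
  field_simp
  ring

theorem hypF_combination_eq_rpow {z : ℝ} (hz : |z| < 1) :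
    2 * hypF (2/3) (-2/3) (4/3) z - 2/3 * (2 - z) * hypF (2/3) (1/3) (4/3) z
      = 2/3 * (1 - z) ^ ((1 : ℝ)/3) := by
  have hA := hasSum_hypF (a := 2/3) (b := -2/3) (c := 4/3) (fun k ↦ by
    refine ⟨?_, ?_, ?_⟩ <;> intro h <;> field_simp at h <;> norm_cast at h
    omega) hz
  have hB := hasSum_hypF (a := 2/3) (b := 1/3) (c := 4/3) (fun k ↦ by
    refine ⟨?_, ?_, ?_⟩ <;> intro h <;> field_simp at h <;> norm_cast at h) hz
  have hD := hasSum_one_sub_rpow (1/3) hz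
  have hsum := (hasSum_nat_add_iff' 1).mpr
    (((hA.mul_left 2).sub (hB.mul_left (4/3))).sub (hD.mul_left (2/3)))
  have key := hsum.unique (((hB.mul_right z).mul_left (-(2/3))).congr_fun fun n ↦ by
    rw [pow_succ]
    linear_combination (z ^ n * z) * ordinaryHypergeometricCoefficient_combination_succ n)
  simp only [Finset.sum_range_one, ordinaryHypergeometricCoefficient, ascPochhammer_zero,
    Polynomial.eval_one, Nat.factorial_zero, Nat.cast_one, inv_one, pow_zero] at key
  linear_combination key

theorem stmt11 (l : ℝ) (h0 : 0 < l) (h2 : l < 2) :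
    2 * hypF (2 / 3) (-2 / 3) (4 / 3) (1 - l)
      - (2 / 3) * (l + 1) * hypF (2 / 3) (1 / 3) (4 / 3) (1 - l)
      = (2 / 3) * l ^ ((1 : ℝ) / 3) := by
  have h := hypF_combination_eq_rpow (z := 1 - l) (abs_lt.mpr ⟨by linarith, by linarith⟩)
  rwa [sub_sub_cancel, show 2 - (1 - l) = l + 1 by ring] at h
end
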